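/- arXiv:1510.06043 — 6 statements merged into one kernel-verified Lean document; each statement's English description precedes it below -/
import Mathlib

section
/- Let J be a bounded interval and K ⊆ J a subinterval. For any function f : J → ℂ of bounded variation, the total variation of f·χ_K on J satisfies V_J(f χ_K) ≤ V_K(f) + 2 sup_K |f|. -/
open ENNReal

/-- Variation of a truncation: `V_J(f·χ_K) ≤ V_K(f) + 2 sup_K |f|`. -/
theorem stmt1 (J K : Set ℝ) (hJ : J.OrdConnected) (hK : K.OrdConnected)
    (hKJ : K ⊆ J) (hJbdd : Bornology.IsBounded J)
    (f : ℝ → ℂ) (hf : eVariationOn f J ≠ ⊤) :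
    eVariationOn (K.indicator f) J ≤
      eVariationOn f K + 2 * ⨆ x ∈ K, (‖f x‖₊ : ℝ≥0∞) := by
  set M : ℝ≥0∞ := ⨆ x ∈ K, (‖f x‖₊ : ℝ≥0∞) with hM
  have hMle : ∀ x ∈ K, (‖f x‖₊ : ℝ≥0∞) ≤ M := fun x hx =>
    le_iSup₂ (f := fun x (_ : x ∈ K) => (‖f x‖₊ : ℝ≥0∞)) x hx
  set g := K.indicator f with hg
  rw [eVariationOn]
  apply iSup_le
  rintro ⟨n, u, hu, us⟩
  simp only
  set t : ℕ → ℝ≥0∞ := fun i => edist (g (u (i + 1))) (g (u i)) with ht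
  have ht0 : ∀ i, u i ∉ K → u (i + 1) ∉ K → t i = 0 := by
    intro i h1 h2
    simp [ht, hg, Set.indicator_of_notMem, h1, h2]
  by_cases hA : ∃ j ≤ n, u j ∈ K
  · classical
    set A : Finset ℕ := (Finset.range (n + 1)).filter (fun j => u j ∈ K) with hAdef
    have hAne : A.Nonempty := by
      obtain ⟨j, hj, hjK⟩ := hA
      exact ⟨j, by simp [hAdef, Nat.lt_succ_iff, hj, hjK]⟩
    set a := A.min' hAne with ha
    set b := A.max' hAne with hb
    have haA := A.min'_mem hAne
    have hbA := A.max'_mem hAne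
    have haK : u a ∈ K := (Finset.mem_filter.mp haA).2
    have hbK : u b ∈ K := (Finset.mem_filter.mp hbA).2
    have hbn : b ≤ n := Nat.lt_succ_iff.mp (Finset.mem_range.mp (Finset.mem_filter.mp hbA).1)
    have hab : a ≤ b := A.min'_le b hbA
    have hmem : ∀ j, j ≤ n → (u j ∈ K ↔ a ≤ j ∧ j ≤ b) := by
      intro j hj
      constructor
      · intro hjK
        have hjA : j ∈ A := Finset.mem_filter.mpr ⟨Finset.mem_range.mpr (Nat.lt_succ_iff.mpr hj), hjK⟩
        exact ⟨A.min'_le j hjA, A.le_max' j hjA⟩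
      · rintro ⟨h1, h2⟩
        exact hK.out haK hbK ⟨hu h1, hu h2⟩
    -- split the sum
    rw [← Finset.sum_filter_add_sum_filter_not (Finset.range n) (fun i => a ≤ i ∧ i < b) t]
    have hIco : (Finset.range n).filter (fun i => a ≤ i ∧ i < b) = Finset.Ico a b := by
      ext i
      simp only [Finset.mem_filter, Finset.mem_range, Finset.mem_Ico]
      omega
    have h1 : ∑ i ∈ (Finset.range n).filter (fun i => a ≤ i ∧ i < b), t i
        ≤ eVariationOn f K := by
      rw [hIco, Finset.sum_Ico_eq_sum_range]
      set v : ℕ → ℝ := fun j => u (min (a + j) b) with hv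
      have hvmono : Monotone v := fun i j hij => hu (min_le_min (by omega) le_rfl)
      have hvK : ∀ j, v j ∈ K := by
        intro j
        refine (hmem _ (le_trans (min_le_right _ _) hbn)).2 ⟨le_min (by omega) hab, min_le_right _ _⟩
      have heq : ∀ j ∈ Finset.range (b - a), t (a + j) = edist (f (v (j + 1))) (f (v j)) := by
        intro j hj
        have hj' : j < b - a := Finset.mem_range.mp hj
        have h1 : v j = u (a + j) := by simp [hv, min_eq_left (by omega : a + j ≤ b)]
        have h2 : v (j + 1) = u (a + j + 1) := by
          simp only [hv]
          congr 1
          omega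
        have hk1 : u (a + j) ∈ K := (hmem _ (by omega)).2 ⟨by omega, by omega⟩
        have hk2 : u (a + j + 1) ∈ K := (hmem _ (by omega)).2 ⟨by omega, by omega⟩
        simp [ht, hg, Set.indicator_of_mem, hk1, hk2, h1, h2]
      rw [Finset.sum_congr rfl heq]
      exact eVariationOn.sum_le (f := f) (n := b - a) hvmono hvK
    have h2 : ∑ i ∈ (Finset.range n).filter (fun i => ¬(a ≤ i ∧ i < b)), t i ≤ 2 * M := by
      set S := (Finset.range n).filter (fun i => ¬(a ≤ i ∧ i < b)) with hS
      have hzero : ∀ i ∈ S, t i ≠ 0 → (i = a - 1 ∨ i = b) := by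
        intro i hiS hti
        simp only [hS, Finset.mem_filter, Finset.mem_range] at hiS
        obtain ⟨hin, hP⟩ := hiS
        by_contra hcon
        push_neg at hcon
        obtain ⟨hne1, hne2⟩ := hcon
        apply hti
        apply ht0
        · intro hmemK
          have := (hmem i (by omega)).1 hmemK
          omega
        · intro hmemK
          have := (hmem (i + 1) (by omega)).1 hmemK
          omega
      have hsum : ∑ i ∈ S.filter (fun i => i = a - 1 ∨ i = b), t i = ∑ i ∈ S, t i :=
        Finset.sum_filter_of_ne hzero
      rw [← hsum]
      set T := S.filter (fun i => i = a - 1 ∨ i = b) with hT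
      have htle : ∀ i ∈ T, t i ≤ M := by
        intro i hiT
        simp only [hT, hS, Finset.mem_filter, Finset.mem_range] at hiT
        obtain ⟨⟨hin, hP⟩, hor⟩ := hiT
        by_cases hib : i = b
        · have hk1 : u b ∈ K := hbK
          have hk2 : u (b + 1) ∉ K := by
            intro hmemK
            by_cases hin' : b + 1 ≤ n
            · have := (hmem _ hin').1 hmemK
              omega
            · omega
          have : t b = (‖f (u b)‖₊ : ℝ≥0∞) := by
            simp [ht, hg, Set.indicator_of_mem, hk1, Set.indicator_of_notMem, hk2,
              edist_comm, enorm_eq_nnnorm]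
          rw [hib, this]
          exact hMle _ hk1
        · have hia : i = a - 1 := by tauto
          have ha1 : 1 ≤ a := by omega
          have hi1 : i + 1 = a := by omega
          have hk1 : u i ∉ K := by
            intro hmemK
            have := (hmem i (by omega)).1 hmemK
            omega
          have hk2 : u (i + 1) ∈ K := by rw [hi1]; exact haK
          have : t i = (‖f (u (i + 1))‖₊ : ℝ≥0∞) := by
            simp [ht, hg, Set.indicator_of_mem, hk2, Set.indicator_of_notMem, hk1,
              enorm_eq_nnnorm]
          rw [this]
          exact hMle _ hk2
      calc ∑ i ∈ T, t i ≤ ∑ _i ∈ T, M := Finset.sum_le_sum htle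
        _ = T.card * M := by rw [Finset.sum_const, nsmul_eq_mul]
        _ ≤ 2 * M := by
            apply mul_le_mul_left
            have hsub : T ⊆ {a - 1, b} := by
              intro i hi
              simp only [hT, Finset.mem_filter] at hi
              simp [hi.2]
            have := Finset.card_le_card hsub
            have h2' : ({a - 1, b} : Finset ℕ).card ≤ 2 :=
              (Finset.card_insert_le _ _).trans (by simp)
            exact_mod_cast le_trans this h2'
    calc _ ≤ eVariationOn f K + 2 * M := add_le_add h1 h2
      _ = _ := rfl
  · push_neg at hA
    have : ∀ i ∈ Finset.range n, t i = 0 := by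
      intro i hi
      have hin : i < n := Finset.mem_range.mp hi
      exact ht0 i (hA i (by omega)) (hA (i + 1) (by omega))
    rw [Finset.sum_congr rfl this]
    simp
end

section
/- Let J be a bounded nonempty interval with positive Lebesgue measure and f : J → ℂ a function of bounded variation. Then the essential supremum of |f| on J is at most V_J(f) + (1/m(J)) ∫_J |f| dm, where m is Lebesgue measure and V_J(f) is the total variation of f over J. -/
open ENNReal MeasureTheory

/-- The essential supremum of a BV function is bounded by its variation plus its mean. -/
theorem stmt2 (J : Set ℝ) (hJ : J.OrdConnected) (hne : J.Nonempty)
    (hbdd : Bornology.IsBounded J) (hm : 0 < volume J)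
    (f : ℝ → ℂ) (hf : eVariationOn f J ≠ ⊤)
    (hint : IntegrableOn f J) :
    essSup (fun x => (‖f x‖₊ : ℝ≥0∞)) (volume.restrict J) ≤
      eVariationOn f J + (volume J)⁻¹ * ∫⁻ x in J, ‖f x‖₊ := by
  set V := eVariationOn f J with hV
  set I := ∫⁻ x in J, (‖f x‖₊ : ℝ≥0∞) with hI
  have hJmeas : MeasurableSet J := hJ.measurableSet
  have hμtop : volume J ≠ ⊤ := by
    obtain ⟨R, hR⟩ := hbdd.subset_closedBall 0
    exact ((measure_mono hR).trans_lt (measure_closedBall_lt_top)).ne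
  have key : ∀ x ∈ J, (‖f x‖₊ : ℝ≥0∞) ≤ V + (volume J)⁻¹ * I := by
    intro x hx
    have h1 : ∀ y ∈ J, (‖f x‖₊ : ℝ≥0∞) ≤ (‖f y‖₊ : ℝ≥0∞) + V := by
      intro y hy
      have := eVariationOn.edist_le f hx hy
      calc (‖f x‖₊ : ℝ≥0∞) ≤ ‖f y‖₊ + edist (f x) (f y) := by
            rw [edist_nndist, nndist_eq_nnnorm, ← ENNReal.coe_add]
            exact_mod_cast nnnorm_le_insert' (f x) (f y)
        _ ≤ ‖f y‖₊ + V := add_le_add_right this _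
    have hmeas : AEMeasurable (fun y => (‖f y‖₊ : ℝ≥0∞)) (volume.restrict J) :=
      hint.aemeasurable.nnnorm.coe_nnreal_ennreal
    have h2 : volume J * (‖f x‖₊ : ℝ≥0∞) ≤ I + volume J * V := by
      calc volume J * (‖f x‖₊ : ℝ≥0∞) = ∫⁻ _ in J, (‖f x‖₊ : ℝ≥0∞) := by
            rw [lintegral_const, Measure.restrict_apply_univ, mul_comm]
        _ ≤ ∫⁻ y in J, ((‖f y‖₊ : ℝ≥0∞) + V) := by
            refine lintegral_mono_ae ?_
            exact (ae_restrict_mem hJmeas).mono h1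
        _ = I + volume J * V := by
            rw [lintegral_add_right' _ aemeasurable_const, lintegral_const,
              Measure.restrict_apply_univ, mul_comm V]
    have h3 : (‖f x‖₊ : ℝ≥0∞) ≤ (I + volume J * V) / volume J := by
      rw [ENNReal.le_div_iff_mul_le (Or.inl hm.ne') (Or.inl hμtop), mul_comm]
      exact h2
    calc (‖f x‖₊ : ℝ≥0∞) ≤ (I + volume J * V) / volume J := h3
      _ = I / volume J + (volume J * V) / volume J :=
          ENNReal.add_div
      _ = V + (volume J)⁻¹ * I := by
          rw [mul_comm (volume J) V, mul_div_assoc,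
            ENNReal.div_self hm.ne' hμtop, mul_one, ENNReal.div_eq_inv_mul, add_comm]
  exact essSup_le_of_ae_le _ ((ae_restrict_mem hJmeas).mono key)
end

section
/- Let (mₖ)_{k≥1} be a sequence with mₖ ∈ {0,1} and mₖ = 1 for at least one k. Define δ(z) = 1 − z − ∑_{k≥1} mₖ z^{k+1}. Then δ is holomorphic on the open unit disk, there exists a unique r ∈ (0,1) with δ(r) = 0, this r is a simple zero (δ'(r) ≠ 0), and every other zero z of δ in the open unit disk satisfies |z| > r. -/
open Metric

/-- The power series `δ(z) = 1 - z - ∑_{k≥1} mₖ z^{k+1}`. -/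
noncomputable def deltaFun (m : ℕ → ℝ) (z : ℂ) : ℂ :=
  1 - z - ∑' k : ℕ, (m (k + 1) : ℂ) * z ^ (k + 2)

section Aux
variable (c : ℕ → ℝ)

lemma aux_summable_norm (hc : ∀ k, 0 ≤ c k ∧ c k ≤ 1) (z : ℂ) (hz : ‖z‖ < 1) :
    Summable (fun k => ‖(c k : ℂ) * z ^ (k + 2)‖) := by
  have h0 : (0:ℝ) ≤ ‖z‖ := norm_nonneg z
  refine Summable.of_nonneg_of_le (fun k => norm_nonneg _) (fun k => ?_)
    ((summable_geometric_of_lt_one h0 hz).mul_left (‖z‖^2))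
  rw [norm_mul, norm_pow]
  calc ‖(c k : ℂ)‖ * ‖z‖ ^ (k+2) ≤ 1 * ‖z‖ ^ (k+2) := by
        apply mul_le_mul_of_nonneg_right _ (by positivity)
        rw [Complex.norm_real, Real.norm_eq_abs, abs_of_nonneg (hc k).1]; exact (hc k).2
    _ = ‖z‖^2 * ‖z‖^k := by ring

lemma aux_summable_real (hc : ∀ k, 0 ≤ c k ∧ c k ≤ 1) (x : ℝ) (hx : 0 ≤ x) (hx1 : x < 1) :
    Summable (fun k => c k * x ^ (k + 2)) := by
  refine Summable.of_nonneg_of_le (fun k => mul_nonneg (hc k).1 (by positivity)) (fun k => ?_)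
    ((summable_geometric_of_lt_one hx hx1).mul_left (x^2))
  calc c k * x ^ (k+2) ≤ 1 * x ^ (k+2) := by
        apply mul_le_mul_of_nonneg_right (hc k).2 (by positivity)
    _ = x^2 * x^k := by ring

lemma aux_summable_real' (hc : ∀ k, 0 ≤ c k ∧ c k ≤ 1) (x : ℝ) (hx : |x| < 1) :
    Summable (fun k => c k * x ^ (k + 2)) := by
  refine Summable.of_norm ?_
  refine Summable.of_nonneg_of_le (fun k => norm_nonneg _) (fun k => ?_)
    ((summable_geometric_of_lt_one (abs_nonneg x) hx).mul_left (|x|^2))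
  rw [Real.norm_eq_abs, abs_mul, abs_pow]
  calc |c k| * |x| ^ (k+2) ≤ 1 * |x| ^ (k+2) := by
        apply mul_le_mul_of_nonneg_right _ (by positivity)
        rw [abs_of_nonneg (hc k).1]; exact (hc k).2
    _ = |x|^2 * |x|^k := by ring

end Aux

noncomputable def Sfun (c : ℕ → ℝ) (x : ℝ) : ℝ := ∑' k, c k * x ^ (k + 2)
noncomputable def ffun (c : ℕ → ℝ) (x : ℝ) : ℝ := 1 - x - Sfun c x

section Aux2
variable (c : ℕ → ℝ)

lemma delta_real (m : ℕ → ℝ) (h01 : ∀ k, 0 ≤ m (k+1) ∧ m (k+1) ≤ 1) (x : ℝ) (hx : |x| < 1) :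
    deltaFun m (x : ℂ) = ((ffun (fun k => m (k+1)) x : ℝ) : ℂ) := by
  have hs := aux_summable_real' (fun k => m (k+1)) h01 x hx
  have hs := aux_summable_real' (fun k => m (k+1)) h01 x hx
  unfold deltaFun ffun Sfun
  push_cast
  rfl

lemma Sfun_mono (hc : ∀ k, 0 ≤ c k ∧ c k ≤ 1) {x y : ℝ} (hx : 0 ≤ x) (hxy : x ≤ y)
    (hy : y < 1) : Sfun c x ≤ Sfun c y := by
  refine Summable.tsum_le_tsum (fun k => ?_)
    (aux_summable_real c hc x hx (lt_of_le_of_lt hxy hy))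
    (aux_summable_real c hc y (hx.trans hxy) hy)
  exact mul_le_mul_of_nonneg_left (pow_le_pow_left₀ hx hxy _) (hc k).1

lemma Sfun_nonneg (hc : ∀ k, 0 ≤ c k ∧ c k ≤ 1) {x : ℝ} (hx : 0 ≤ x) :
    0 ≤ Sfun c x :=
  tsum_nonneg (fun k => mul_nonneg (hc k).1 (by positivity))

lemma ffun_dec (hc : ∀ k, 0 ≤ c k ∧ c k ≤ 1) {x y : ℝ} (hx : 0 ≤ x) (hxy : x ≤ y)
    (hy : y < 1) : ffun c y ≤ ffun c x - (y - x) := by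
  have := Sfun_mono c hc hx hxy hy
  unfold ffun; linarith

lemma ffun_zero : ffun c 0 = 1 := by
  unfold ffun Sfun
  have : (fun k : ℕ => c k * (0:ℝ) ^ (k + 2)) = fun _ => 0 := by
    funext k; simp [zero_pow]
  rw [this, tsum_zero]; ring

end Aux2

lemma delta_diff (m : ℕ → ℝ) (h01 : ∀ k, 0 ≤ m (k+1) ∧ m (k+1) ≤ 1) :
    DifferentiableOn ℂ (deltaFun m) (ball (0 : ℂ) 1) := by
  intro z hz
  rw [mem_ball_zero_iff] at hz
  set R : ℝ := (‖z‖ + 1) / 2 with hRdef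
  have h0 : (0:ℝ) ≤ ‖z‖ := norm_nonneg z
  have hR0 : (0:ℝ) ≤ R := by positivity
  have hR1 : R < 1 := by simp only [hRdef]; linarith
  have hzR : ‖z‖ < R := by simp only [hRdef]; linarith
  have hu : Summable (fun n : ℕ => ((n:ℝ) + 2) * R ^ (n+1)) := by
    have h1 := summable_pow_mul_geometric_of_norm_lt_one 1
      (r := R) (by rwa [Real.norm_eq_abs, abs_of_nonneg hR0])
    have h2 := summable_geometric_of_lt_one hR0 hR1
    exact ((h1.mul_left R).add (h2.mul_left (2*R))).congr (fun n => by push_cast; ring)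
  have hg : ∀ (n : ℕ), ∀ w ∈ ball (0:ℂ) R,
      HasDerivAt (fun w : ℂ => (m (n+1) : ℂ) * w ^ (n+2))
        ((m (n+1) : ℂ) * (((n:ℂ)+2) * w ^ (n+1))) w := by
    intro n w _
    have := (hasDerivAt_pow (n+2) w).const_mul ((m (n+1) : ℂ))
    refine this.congr_deriv ?_
    push_cast
    ring_nf
  have hg' : ∀ (n : ℕ), ∀ w ∈ ball (0:ℂ) R,
      ‖(m (n+1) : ℂ) * (((n:ℂ)+2) * w ^ (n+1))‖ ≤ ((n:ℝ) + 2) * R ^ (n+1) := by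
    intro n w hw
    rw [mem_ball_zero_iff] at hw
    rw [norm_mul, norm_mul, norm_pow]
    have h1 : ‖(m (n+1) : ℂ)‖ ≤ 1 := by
      rw [Complex.norm_real, Real.norm_eq_abs, abs_of_nonneg (h01 n).1]; exact (h01 n).2
    have h2 : ‖((n:ℂ)+2)‖ = (n:ℝ) + 2 := by
      rw [show ((n:ℂ)+2) = (((n:ℝ)+2 : ℝ) : ℂ) by push_cast; ring, Complex.norm_real,
        Real.norm_eq_abs, abs_of_nonneg (by positivity)]
    rw [h2]
    calc ‖(m (n+1) : ℂ)‖ * (((n:ℝ)+2) * ‖w‖ ^ (n+1))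
        ≤ 1 * (((n:ℝ)+2) * R ^ (n+1)) := by
          apply mul_le_mul h1 _ (by positivity) one_pos.le
          exact mul_le_mul_of_nonneg_left (pow_le_pow_left₀ (norm_nonneg w) hw.le _) (by positivity)
      _ = ((n:ℝ)+2) * R ^ (n+1) := one_mul _
  have hg0 : Summable (fun n : ℕ => (m (n+1) : ℂ) * (0:ℂ) ^ (n+2)) := by
    apply summable_of_ne_finset_zero (s := ∅)
    intro n _
    simp [zero_pow]
  have hmem0 : (0:ℂ) ∈ ball (0:ℂ) R := by rw [mem_ball_zero_iff]; simpa using lt_of_le_of_lt h0 hzR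
  have hmemz : z ∈ ball (0:ℂ) R := by rwa [mem_ball_zero_iff]
  have h := hasDerivAt_tsum_of_isPreconnected hu isOpen_ball
    (convex_ball _ _).isPreconnected hg hg' hmem0 hg0 hmemz
  have hδ : HasDerivAt (deltaFun m)
      (0 - 1 - ∑' n : ℕ, (m (n+1) : ℂ) * (((n:ℂ)+2) * z ^ (n+1))) z :=
    ((hasDerivAt_const z (1:ℂ)).sub (hasDerivAt_id z)).sub h
  exact hδ.differentiableAt.differentiableWithinAt

/-- `δ` is holomorphic on the unit disk, has a unique zero `r ∈ (0,1)`, this zero is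
simple, and all other zeros in the unit disk have strictly larger modulus. -/
theorem stmt5 (m : ℕ → ℝ) (h01 : ∀ k, 1 ≤ k → m k = 0 ∨ m k = 1)
    (hone : ∃ k, 1 ≤ k ∧ m k = 1) :
    DifferentiableOn ℂ (deltaFun m) (ball (0 : ℂ) 1) ∧
    ∃ r : ℝ, r ∈ Set.Ioo (0 : ℝ) 1 ∧ deltaFun m (r : ℂ) = 0 ∧
      (∀ r' ∈ Set.Ioo (0 : ℝ) 1, deltaFun m (r' : ℂ) = 0 → r' = r) ∧
      deriv (deltaFun m) (r : ℂ) ≠ 0 ∧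
      ∀ z : ℂ, ‖z‖ < 1 → deltaFun m z = 0 → z ≠ (r : ℂ) → r < ‖z‖ := by
  set c : ℕ → ℝ := fun k => m (k + 1) with hcdef
  have hc : ∀ k, 0 ≤ c k ∧ c k ≤ 1 := by
    intro k
    rcases h01 (k+1) (by omega) with h | h <;> simp [hcdef, h]
  have hdiff := delta_diff m hc
  refine ⟨hdiff, ?_⟩
  -- transfer to real function
  have hreal : ∀ x : ℝ, |x| < 1 → deltaFun m (x : ℂ) = ((ffun c x : ℝ) : ℂ) :=
    fun x hx => delta_real m hc x hx
  -- find the point where f is negative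
  obtain ⟨k₀, hk₀, hmk₀⟩ := hone
  set j : ℕ := k₀ - 1 with hjdef
  have hcj : c j = 1 := by
    simp only [hcdef, hjdef]
    rwa [Nat.sub_add_cancel hk₀]
  set N : ℕ := j + 2 with hNdef
  have hN0 : (N:ℝ) ≠ 0 := by positivity
  set x₀ : ℝ := (2/3 : ℝ) ^ ((N:ℝ)⁻¹) with hx₀def
  have hx₀pos : 0 < x₀ := Real.rpow_pos_of_pos (by norm_num) _
  have hx₀lt1 : x₀ < 1 := Real.rpow_lt_one (by norm_num) (by norm_num) (by positivity)
  have hx₀pow : x₀ ^ N = 2/3 := by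
    rw [hx₀def, ← Real.rpow_natCast ((2/3 : ℝ) ^ ((N:ℝ)⁻¹)) N, ← Real.rpow_mul (by norm_num),
      inv_mul_cancel₀ hN0, Real.rpow_one]
  have hx₀ge : 2/3 ≤ x₀ := by
    calc (2/3 : ℝ) = x₀ ^ N := hx₀pow.symm
      _ ≤ x₀ ^ 1 := pow_le_pow_of_le_one hx₀pos.le hx₀lt1.le (by omega)
      _ = x₀ := pow_one x₀
  have hfx₀ : ffun c x₀ < 0 := by
    have hS : c j * x₀ ^ (j+2) ≤ Sfun c x₀ :=
      Summable.le_tsum (aux_summable_real c hc x₀ hx₀pos.le hx₀lt1) j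
        (fun i _ => mul_nonneg (hc i).1 (by positivity))
    rw [hcj, one_mul, ← hNdef, hx₀pow] at hS
    unfold ffun
    linarith
  -- continuity
  have hmaps : ∀ x : ℝ, |x| < 1 → (x:ℂ) ∈ ball (0:ℂ) 1 := by
    intro x hx
    rw [mem_ball_zero_iff, Complex.norm_real, Real.norm_eq_abs]
    exact hx
  have hcont : ContinuousOn (ffun c) (Set.Icc 0 x₀) := by
    have h1 : ContinuousOn (fun x : ℝ => (deltaFun m (x:ℂ)).re) (Set.Icc 0 x₀) := by
      apply Complex.continuous_re.comp_continuousOn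
      apply hdiff.continuousOn.comp Complex.continuous_ofReal.continuousOn
      intro x hx
      exact hmaps x (by rw [abs_of_nonneg hx.1]; exact lt_of_le_of_lt hx.2 hx₀lt1)
    apply h1.congr
    intro x hx
    have hrx := hreal x (by rw [abs_of_nonneg hx.1]; exact lt_of_le_of_lt hx.2 hx₀lt1)
    simp only [hrx, Complex.ofReal_re]
  -- IVT
  have h0mem : (0:ℝ) ∈ Set.Ioo (ffun c x₀) (ffun c 0) := by
    rw [ffun_zero]
    exact ⟨hfx₀, one_pos⟩
  obtain ⟨r, hrIoo, hfr⟩ := intermediate_value_Ioo' hx₀pos.le hcont h0mem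
  have hr : r ∈ Set.Ioo (0:ℝ) 1 := ⟨hrIoo.1, hrIoo.2.trans hx₀lt1⟩
  have hrabs : |r| < 1 := by rw [abs_of_nonneg hr.1.le]; exact hr.2
  -- uniqueness at the level of ffun
  have huniq : ∀ x, 0 ≤ x → x < 1 → ffun c x = 0 → x = r := by
    intro x hx0 hx1 hfx
    rcases lt_trichotomy x r with h | h | h
    · have := ffun_dec c hc hx0 h.le hr.2
      rw [hfr, hfx] at this; linarith
    · exact h
    · have := ffun_dec c hc hr.1.le h.le hx1
      rw [hfr, hfx] at this; linarith
  -- the derivative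
  have hdAt : DifferentiableAt ℂ (deltaFun m) (r:ℂ) :=
    hdiff.differentiableAt (isOpen_ball.mem_nhds (hmaps r hrabs))
  have hd : HasDerivAt (deltaFun m) (deriv (deltaFun m) (r:ℂ)) (r:ℂ) := hdAt.hasDerivAt
  set d : ℂ := deriv (deltaFun m) (r:ℂ) with hddef
  have hre : HasDerivAt (fun x : ℝ => (deltaFun m (x:ℂ)).re) d.re r := hd.real_of_complex
  have hfd : HasDerivAt (ffun c) d.re r := by
    apply hre.congr_of_eventuallyEq
    filter_upwards [isOpen_Ioo.eventually_mem (show r ∈ Set.Ioo (-1:ℝ) 1 by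
      constructor <;> [linarith [hr.1]; exact hr.2])] with x hx
    rw [hreal x (abs_lt.2 ⟨hx.1, hx.2⟩)]
    simp
  have hdre : d.re ≤ -1 := by
    have hslope := hasDerivAt_iff_tendsto_slope.mp hfd
    refine le_of_tendsto hslope ?_
    have hev : ∀ᶠ x : ℝ in nhdsWithin r {r}ᶜ, x ∈ Set.Ioo (0:ℝ) 1 :=
      eventually_nhdsWithin_of_eventually_nhds (isOpen_Ioo.eventually_mem hr)
    filter_upwards [hev, self_mem_nhdsWithin] with x hx hxr
    have hxr' : x ≠ r := hxr
    rw [slope_def_field]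
    rcases lt_or_gt_of_ne hxr' with h | h
    · have := ffun_dec c hc hx.1.le h.le hr.2
      rw [div_le_iff_of_neg (by linarith : x - r < 0)]
      linarith
    · have := ffun_dec c hc hr.1.le h.le hx.2
      rw [div_le_iff₀ (by linarith : (0:ℝ) < x - r)]
      linarith
  have hdne : d ≠ 0 := by
    intro h
    rw [h] at hdre
    simp at hdre
    linarith
  refine ⟨r, hr, ?_, ?_, hdne, ?_⟩
  · rw [hreal r hrabs, hfr, Complex.ofReal_zero]
  · intro r' hr' hδr'
    rw [hreal r' (by rw [abs_of_nonneg hr'.1.le]; exact hr'.2)] at hδr'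
    exact huniq r' hr'.1.le hr'.2 (by exact_mod_cast hδr')
  · -- minimality of modulus
    intro z hz hδz hzr
    by_contra hle'
    push_neg at hle'
    set x : ℝ := ‖z‖ with hxdef
    have hx0 : 0 ≤ x := norm_nonneg z
    have hx1 : x < 1 := hz
    -- f x ≥ 0
    have hfx : 0 ≤ ffun c x := by
      rcases eq_or_lt_of_le hle' with h | h
      · rw [show x = r from h]; rw [hfr]
      · have := ffun_dec c hc hx0 h.le hr.2
        rw [hfr] at this; linarith
    -- real part analysis
    have hsumc : Summable (fun k => (c k : ℂ) * z ^ (k+2)) :=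
      (aux_summable_norm c hc z hz).of_norm
    have hxyz : 1 - z.re - (∑' k : ℕ, (c k : ℂ) * z ^ (k+2)).re = 0 := by
      have : (deltaFun m z).re = 0 := by rw [hδz]; rfl
      unfold deltaFun at this
      simpa using this
    have hretsum : (∑' k : ℕ, (c k : ℂ) * z ^ (k+2)).re
        = ∑' k : ℕ, ((c k : ℂ) * z ^ (k+2)).re := Complex.re_tsum hsumc
    have hrebound : ∑' k : ℕ, ((c k : ℂ) * z ^ (k+2)).re ≤ Sfun c x := by
      refine Summable.tsum_le_tsum (fun k => ?_)
        ((Complex.hasSum_re hsumc.hasSum).summable)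
        (aux_summable_real c hc x hx0 hx1)
      rw [Complex.re_ofReal_mul]
      refine mul_le_mul_of_nonneg_left ?_ (hc k).1
      calc (z ^ (k+2)).re ≤ ‖z ^ (k+2)‖ := Complex.re_le_norm _
        _ = x ^ (k+2) := by rw [norm_pow]
    have hSle : Sfun c x ≤ 1 - x := by unfold ffun at hfx; linarith
    have hrle : z.re ≤ x := by
      rw [hxdef]; exact Complex.re_le_norm z
    have hrge : x ≤ z.re := by
      rw [hretsum] at hxyz
      linarith
    have hzre : z.re = x := le_antisymm hrle hrge
    have hzim : z.im = 0 := by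
      have h2 : x ^ 2 = z.re ^ 2 + z.im ^ 2 := by
        rw [hxdef, Complex.sq_norm, Complex.normSq_apply]; ring
      rw [hzre] at h2
      nlinarith [sq_nonneg z.im]
    have hzeq : z = (x : ℂ) := by
      apply Complex.ext
      · simpa using hzre
      · simpa using hzim
    rw [hzeq] at hδz
    rw [hreal x (by rw [abs_of_nonneg hx0]; exact hx1)] at hδz
    have hfx0 : ffun c x = 0 := by exact_mod_cast hδz
    have : x = r := huniq x hx0 hx1 hfx0
    exact hzr (by rw [hzeq, this])
end

section
/- The golden ratio γ = (1+√5)/2 is an eigenvalue of algebraic multiplicity two, but geometric multiplicity one, of the 5×5 transition matrix π with π(1,1)=π(1,2)=π(1,3)=1, π(2,1)=1, π(3,3)=π(3,4)=1, π(4,5)=1, π(5,3)=π(5,4)=1, and all other entries zero. That is, det(γI − π) = 0, d/dλ det(λI − π) vanishes at λ = γ, and the kernel of π − γI is one-dimensional. -/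
open Matrix

/-- The transition matrix for the states 1→{1,2,3}, 2→{1}, 3→{3,4}, 4→{5}, 5→{3,4}. -/
def piMat : Matrix (Fin 5) (Fin 5) ℝ :=
  !![1, 1, 1, 0, 0;
     1, 0, 0, 0, 0;
     0, 0, 1, 1, 0;
     0, 0, 0, 0, 1;
     0, 0, 1, 1, 0]

set_option maxHeartbeats 1000000 in
private lemma detPoly (x : ℝ) :
    (x • (1 : Matrix (Fin 5) (Fin 5) ℝ) - piMat).det
      = x^5 - 2*x^4 - x^3 + 2*x^2 + x := by
  have h : x • (1 : Matrix (Fin 5) (Fin 5) ℝ) - piMat =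
      !![x-1, -1, -1, 0, 0;
         -1, x, 0, 0, 0;
         0, 0, x-1, -1, 0;
         0, 0, 0, x, -1;
         0, 0, -1, -1, x] := by
    ext i j
    fin_cases i <;> fin_cases j <;>
      simp [piMat, Matrix.one_apply, Matrix.vecHead, Matrix.vecTail]
  rw [h]
  simp [Matrix.det_succ_row_zero, Fin.sum_univ_succ, Fin.succAbove,
    Matrix.vecHead, Matrix.vecTail]
  ring

set_option maxHeartbeats 1000000 in
/-- The golden ratio is an eigenvalue of algebraic multiplicity two but geometric
multiplicity one of the transition matrix `piMat`. -/
theorem stmt8 :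
    let γ : ℝ := (1 + Real.sqrt 5) / 2
    (γ • (1 : Matrix (Fin 5) (Fin 5) ℝ) - piMat).det = 0 ∧
    deriv (fun x : ℝ => (x • (1 : Matrix (Fin 5) (Fin 5) ℝ) - piMat).det) γ = 0 ∧
    Module.finrank ℝ
      (LinearMap.ker (Matrix.toLin' (piMat - γ • (1 : Matrix (Fin 5) (Fin 5) ℝ)))) = 1 := by
  intro γ
  have h5 : Real.sqrt 5 ^ 2 = 5 := Real.sq_sqrt (by norm_num)
  have hγ : γ ^ 2 = γ + 1 := by
    show ((1 + Real.sqrt 5) / 2) ^ 2 = (1 + Real.sqrt 5) / 2 + 1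
    nlinarith [h5]
  clear_value γ
  refine ⟨?_, ?_, ?_⟩
  · rw [detPoly]; linear_combination (γ^3 - γ^2 - γ) * hγ
  · have hfun : (fun x : ℝ => (x • (1 : Matrix (Fin 5) (Fin 5) ℝ) - piMat).det)
        = fun x : ℝ => x^5 - 2*x^4 - x^3 + 2*x^2 + x := funext detPoly
    rw [hfun]
    have hd : HasDerivAt (fun x : ℝ => x^5 - 2*x^4 - x^3 + 2*x^2 + x)
        (5*γ^4 - 2*(4*γ^3) - 3*γ^2 + 2*(2*γ) + 1) γ := by
      have h1 := hasDerivAt_pow 5 γ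
      have h2 := (hasDerivAt_pow 4 γ).const_mul (2:ℝ)
      have h3 := hasDerivAt_pow 3 γ
      have h4 := (hasDerivAt_pow 2 γ).const_mul (2:ℝ)
      have h0 := hasDerivAt_id γ
      refine HasDerivAt.congr_deriv ((((h1.sub h2).sub h3).add h4).add h0) ?_
      push_cast; ring
    rw [hd.deriv]
    linear_combination (5*γ^2 - 3*γ - 1) * hγ
  · have key : LinearMap.ker (Matrix.toLin' (piMat - γ • (1 : Matrix (Fin 5) (Fin 5) ℝ)))
        = Submodule.span ℝ {![γ, 1, 0, 0, 0]} := by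
      apply le_antisymm
      · intro x hx
        rw [LinearMap.mem_ker, Matrix.toLin'_apply] at hx
        have h0 := congrFun hx 0
        have h1 := congrFun hx 1
        have h2 := congrFun hx 2
        have h3 := congrFun hx 3
        have h4 := congrFun hx 4
        simp [piMat, Matrix.mulVec, dotProduct, Fin.sum_univ_five,
          Matrix.one_apply] at h0 h1 h2 h3 h4
        have hx2 : x 2 = 0 := by linear_combination h0 + (γ - 1) * h1 + x 1 * hγ
        have hx3 : x 3 = 0 := by linear_combination h2 + (γ - 1) * hx2
        have hx4 : x 4 = 0 := by linear_combination h3 + γ * hx3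
        have hx0 : x 0 = γ * x 1 := by linear_combination h1
        rw [Submodule.mem_span_singleton]
        refine ⟨x 1, ?_⟩
        funext i
        fin_cases i <;> simp [hx0, hx2, hx3, hx4, mul_comm]
      · rw [Submodule.span_le, Set.singleton_subset_iff]
        rw [SetLike.mem_coe, LinearMap.mem_ker, Matrix.toLin'_apply]
        funext i
        fin_cases i <;>
          simp [piMat, Matrix.mulVec, dotProduct, Fin.sum_univ_five,
            Matrix.one_apply] <;>
          linear_combination -hγ
    have hv : (![γ, 1, 0, 0, 0] : Fin 5 → ℝ) ≠ 0 := by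
      intro h
      have := congrFun h 1
      simp at this
    rw [key, finrank_span_singleton hv]
end

section
/- Let X be a Banach space with norm ‖·‖ and a weaker norm |·| satisfying |f| ≤ ‖f‖, and let L : X → X be bounded with respect to ‖·‖. Suppose λ ∈ ℂ is a pole of order p of the resolvent z ↦ (zI − L)^{-1}, with associated spectral projection P (the residue projection over a small circle around λ). Suppose there is K₁ > 0 with ‖Pf‖ ≤ K₁|Pf| for all f ∈ X. If λ' is an eigenvalue of a bounded operator L' with eigenvector f' satisfying Pf' = f', ‖f'‖ = 1, and L'f' = λ'f', and Π := (L' − λI)^p P', where P' is the spectral projection of L' for the disk around λ and P'f' = f', then |λ' − λ|^p ≤ K₁ · |||Π|||, where ||| · ||| is the operator norm from (X,‖·‖) to (X,|·|). -/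
open Filter

/-- The operator norm of `A` viewed as an operator from `(X, ‖·‖)` to `(X, N)`,
where `N` is a (weaker) norm on `X`. -/
noncomputable def tripNorm {X : Type*} [NormedAddCommGroup X] [NormedSpace ℂ X]
    (N : X → ℝ) (A : X →L[ℂ] X) : ℝ :=
  sSup {y : ℝ | ∃ f : X, ‖f‖ ≤ 1 ∧ y = N (A f)}

/-- Lower bound for the eigenvalue displacement in terms of the weak operator norm of
`Π = (L' − λI)^p P'`.  Here `λ` is a pole of order `p` of the resolvent of `L`, `P` its
spectral projection satisfying `‖Pf‖ ≤ K₁ N(Pf)`, and `λ'` an eigenvalue of `L'` with a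
normalised eigenvector `f'` fixed by `P` and by the spectral projection `P'` of `L'`. -/
theorem stmt11 {X : Type*} [NormedAddCommGroup X] [NormedSpace ℂ X] [CompleteSpace X]
    (N : X → ℝ)
    (hN0 : ∀ f : X, 0 ≤ N f)
    (hNadd : ∀ f g : X, N (f + g) ≤ N f + N g)
    (hNsmul : ∀ (c : ℂ) (f : X), N (c • f) = ‖c‖ * N f)
    (hNdef : ∀ f : X, N f = 0 → f = 0)
    (hNle : ∀ f : X, N f ≤ ‖f‖)
    (L L' : X →L[ℂ] X) (lam lam' : ℂ) (p : ℕ) (hp : 1 ≤ p)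
    (hpole : ∃ g : ℂ → (X →L[ℂ] X), AnalyticAt ℂ g lam ∧ g lam ≠ 0 ∧
      ∀ᶠ z in nhdsWithin lam {lam}ᶜ,
        g z = (z - lam) ^ p • Ring.inverse (z • (1 : X →L[ℂ] X) - L))
    (P P' : X →L[ℂ] X)
    (hPproj : P.comp P = P) (hPcomm : L.comp P = P.comp L)
    (hP'proj : P'.comp P' = P') (hP'comm : L'.comp P' = P'.comp L')
    (K₁ : ℝ) (hK₁ : 0 < K₁)
    (hKbound : ∀ f : X, ‖P f‖ ≤ K₁ * N (P f))
    (f' : X) (heig : L' f' = lam' • f') (hPf' : P f' = f') (hP'f' : P' f' = f')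
    (hf'norm : ‖f'‖ = 1) :
    ‖lam' - lam‖ ^ p ≤
      K₁ * tripNorm N (((L' - lam • (1 : X →L[ℂ] X)) ^ p).comp P') := by

  set A := ((L' - lam • (1 : X →L[ℂ] X)) ^ p).comp P' with hA
  -- (L' - lam•1)^n f' = (lam'-lam)^n • f'
  have hpow : ∀ n : ℕ, ((L' - lam • (1 : X →L[ℂ] X)) ^ n) f' = (lam' - lam) ^ n • f' := by
    intro n
    induction n with
    | zero => simp
    | succ n ih =>
      have h1 : (L' - lam • (1 : X →L[ℂ] X)) f' = (lam' - lam) • f' := by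
        simp [ContinuousLinearMap.sub_apply, heig, sub_smul]
      rw [pow_succ, ContinuousLinearMap.mul_apply, h1, map_smul, ih, smul_smul,
        ← pow_succ']
  have hAf' : A f' = (lam' - lam) ^ p • f' := by
    rw [hA, ContinuousLinearMap.comp_apply, hP'f', hpow]
  have hNAf' : N (A f') = ‖lam' - lam‖ ^ p * N f' := by
    rw [hAf', hNsmul, norm_pow]
  -- the set is bounded above and nonempty
  have hbdd : BddAbove {y : ℝ | ∃ f : X, ‖f‖ ≤ 1 ∧ y = N (A f)} := by
    refine ⟨‖A‖, ?_⟩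
    rintro y ⟨f, hf, rfl⟩
    calc N (A f) ≤ ‖A f‖ := hNle _
      _ ≤ ‖A‖ * ‖f‖ := A.le_opNorm f
      _ ≤ ‖A‖ * 1 := by
          exact mul_le_mul_of_nonneg_left hf (norm_nonneg _)
      _ = ‖A‖ := mul_one _
  have hmem : N (A f') ∈ {y : ℝ | ∃ f : X, ‖f‖ ≤ 1 ∧ y = N (A f)} :=
    ⟨f', le_of_eq hf'norm, rfl⟩
  have htrip : N (A f') ≤ tripNorm N A := le_csSup hbdd hmem
  -- 1 ≤ K₁ * N f'
  have h1 : 1 ≤ K₁ * N f' := by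
    have := hKbound f'
    rw [hPf', hf'norm] at this
    exact this
  calc ‖lam' - lam‖ ^ p = ‖lam' - lam‖ ^ p * 1 := (mul_one _).symm
    _ ≤ ‖lam' - lam‖ ^ p * (K₁ * N f') := by
        exact mul_le_mul_of_nonneg_left h1 (by positivity)
    _ = K₁ * (‖lam' - lam‖ ^ p * N f') := by ring
    _ = K₁ * N (A f') := by rw [hNAf']
    _ ≤ K₁ * tripNorm N A := mul_le_mul_of_nonneg_left htrip hK₁.le
end

section
/- Let T : ⋃Z → I be piecewise monotonic C¹ with finite partition Z, and let g : ⋃Z → ℂ be bounded of bounded variation on each partition element, with Γ = sup_{Z∈Z} V_Z(g) and suppose sup_{Z∈Z_k} sup_Z |g_k| ≤ M β^k for all k ≥ 1 and some M ≥ 1, β > 0. Then for every n ∈ ℕ and every cylinder Z ∈ Z_n, the variation of g_n = ∏_{k=0}^{n-1} g∘T^k on Z satisfies V_Z(g_n) ≤ n Γ M² β^{n-1}. -/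
open ENNReal

/-- The cylinder set of level `k` associated to a word `w` in the alphabet of
partition elements: `Z_{w₀} ∩ T⁻¹Z_{w₁} ∩ … ∩ T^{-(k-1)}Z_{w_{k-1}}`. -/
def cylSet {ι : Type*} (T : ℝ → ℝ) (part : ι → Set ℝ) {k : ℕ} (w : Fin k → ι) : Set ℝ :=
  ⋂ j : Fin k, (T^[(j : ℕ)]) ⁻¹' (part (w j))

/-- Telescoping estimate for differences of products in `ℂ`. -/
private lemma norm_prod_sub_prod (a b : ℕ → ℂ) (n : ℕ) :
    ‖(∏ j ∈ Finset.range n, b j) - ∏ j ∈ Finset.range n, a j‖ ≤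
      ∑ k ∈ Finset.range n,
        ‖∏ j ∈ Finset.range k, b j‖ * ‖b k - a k‖ * ‖∏ j ∈ Finset.Ico (k+1) n, a j‖ := by
  induction n with
  | zero => simp
  | succ n ih =>
    rw [Finset.prod_range_succ, Finset.prod_range_succ, Finset.sum_range_succ]
    have key : (∏ j ∈ Finset.range n, b j) * b n - (∏ j ∈ Finset.range n, a j) * a n
        = ((∏ j ∈ Finset.range n, b j) - ∏ j ∈ Finset.range n, a j) * a n
          + (∏ j ∈ Finset.range n, b j) * (b n - a n) := by ring
    rw [key]
    refine (norm_add_le _ _).trans ?_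
    rw [norm_mul, norm_mul]
    have h2 : ‖∏ j ∈ Finset.Ico (n+1) (n+1), a j‖ = 1 := by simp
    have hstep : ‖(∏ j ∈ Finset.range n, b j) - ∏ j ∈ Finset.range n, a j‖ * ‖a n‖ ≤
        ∑ k ∈ Finset.range n,
          ‖∏ j ∈ Finset.range k, b j‖ * ‖b k - a k‖ * ‖∏ j ∈ Finset.Ico (k+1) (n+1), a j‖ := by
      refine le_trans (mul_le_mul_of_nonneg_right ih (norm_nonneg _)) ?_
      rw [Finset.sum_mul]
      refine le_of_eq (Finset.sum_congr rfl fun k hk => ?_)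
      have h3 : (∏ j ∈ Finset.Ico (k+1) (n+1), a j) = (∏ j ∈ Finset.Ico (k+1) n, a j) * a n :=
        Finset.prod_Ico_succ_top (Nat.succ_le_of_lt (Finset.mem_range.mp hk)) a
      rw [h3, norm_mul, mul_assoc]
    calc _ ≤ (∑ k ∈ Finset.range n,
          ‖∏ j ∈ Finset.range k, b j‖ * ‖b k - a k‖ * ‖∏ j ∈ Finset.Ico (k+1) (n+1), a j‖)
          + ‖∏ j ∈ Finset.range n, b j‖ * ‖b n - a n‖ :=
        add_le_add hstep le_rfl
      _ = _ := by rw [h2, mul_one]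

/-- Product rule for variation: `V(∏ fₖ) ≤ ∑ₖ Aₖ Bₖ V(fₖ)` where `Aₖ` bounds the
head partial products and `Bₖ` the tail partial products on `s`. -/
private lemma evar_prod_le (f : ℕ → ℝ → ℂ) (n : ℕ) (s : Set ℝ) (A B : ℕ → ℝ)
    (hA0 : ∀ k, 0 ≤ A k) (hB0 : ∀ k, 0 ≤ B k)
    (hA : ∀ k, k < n → ∀ x ∈ s, ‖∏ j ∈ Finset.range k, f j x‖ ≤ A k)
    (hB : ∀ k, k < n → ∀ x ∈ s, ‖∏ j ∈ Finset.Ico (k+1) n, f j x‖ ≤ B k) :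
    eVariationOn (fun x => ∏ j ∈ Finset.range n, f j x) s ≤
      ∑ k ∈ Finset.range n, ENNReal.ofReal (A k * B k) * eVariationOn (f k) s := by
  have main : ∀ (m : ℕ) (u : ℕ → ℝ), Monotone u → (∀ i, u i ∈ s) →
      (∑ i ∈ Finset.range m,
        edist (∏ j ∈ Finset.range n, f j (u (i+1))) (∏ j ∈ Finset.range n, f j (u i))) ≤
      ∑ k ∈ Finset.range n, ENNReal.ofReal (A k * B k) * eVariationOn (f k) s := by
    intro m u hu us
    have key : ∀ i : ℕ,
        edist (∏ j ∈ Finset.range n, f j (u (i+1))) (∏ j ∈ Finset.range n, f j (u i)) ≤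
        ∑ k ∈ Finset.range n,
          ENNReal.ofReal (A k * B k) * edist (f k (u (i+1))) (f k (u i)) := by
      intro i
      have h1 : ‖(∏ j ∈ Finset.range n, f j (u (i+1))) - ∏ j ∈ Finset.range n, f j (u i)‖ ≤
          ∑ k ∈ Finset.range n, (A k * B k) * ‖f k (u (i+1)) - f k (u i)‖ := by
        refine (norm_prod_sub_prod _ _ n).trans (Finset.sum_le_sum fun k hk => ?_)
        have hk' := Finset.mem_range.mp hk
        calc ‖∏ j ∈ Finset.range k, f j (u (i+1))‖ * ‖f k (u (i+1)) - f k (u i)‖ *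
              ‖∏ j ∈ Finset.Ico (k+1) n, f j (u i)‖
            ≤ ‖∏ j ∈ Finset.range k, f j (u (i+1))‖ * ‖f k (u (i+1)) - f k (u i)‖ * B k :=
              mul_le_mul_of_nonneg_left (hB k hk' _ (us i))
                (mul_nonneg (norm_nonneg _) (norm_nonneg _))
          _ ≤ A k * ‖f k (u (i+1)) - f k (u i)‖ * B k :=
              mul_le_mul_of_nonneg_right
                (mul_le_mul_of_nonneg_right (hA k hk' _ (us (i+1))) (norm_nonneg _)) (hB0 k)
          _ = (A k * B k) * ‖f k (u (i+1)) - f k (u i)‖ := by ring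
      calc edist (∏ j ∈ Finset.range n, f j (u (i+1))) (∏ j ∈ Finset.range n, f j (u i))
          = ENNReal.ofReal ‖(∏ j ∈ Finset.range n, f j (u (i+1)))
              - ∏ j ∈ Finset.range n, f j (u i)‖ := by rw [edist_dist, dist_eq_norm]
        _ ≤ ENNReal.ofReal (∑ k ∈ Finset.range n, (A k * B k) * ‖f k (u (i+1)) - f k (u i)‖) :=
            ENNReal.ofReal_le_ofReal h1
        _ = ∑ k ∈ Finset.range n,
              ENNReal.ofReal ((A k * B k) * ‖f k (u (i+1)) - f k (u i)‖) :=
            ENNReal.ofReal_sum_of_nonneg fun k _ =>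
              mul_nonneg (mul_nonneg (hA0 k) (hB0 k)) (norm_nonneg _)
        _ = ∑ k ∈ Finset.range n,
              ENNReal.ofReal (A k * B k) * edist (f k (u (i+1))) (f k (u i)) := by
            refine Finset.sum_congr rfl fun k _ => ?_
            rw [ENNReal.ofReal_mul (mul_nonneg (hA0 k) (hB0 k)), edist_dist, dist_eq_norm]
    calc (∑ i ∈ Finset.range m,
            edist (∏ j ∈ Finset.range n, f j (u (i+1))) (∏ j ∈ Finset.range n, f j (u i)))
        ≤ ∑ i ∈ Finset.range m, ∑ k ∈ Finset.range n,
            ENNReal.ofReal (A k * B k) * edist (f k (u (i+1))) (f k (u i)) :=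
          Finset.sum_le_sum fun i _ => key i
      _ = ∑ k ∈ Finset.range n, ∑ i ∈ Finset.range m,
            ENNReal.ofReal (A k * B k) * edist (f k (u (i+1))) (f k (u i)) := Finset.sum_comm
      _ ≤ ∑ k ∈ Finset.range n, ENNReal.ofReal (A k * B k) * eVariationOn (f k) s := by
          refine Finset.sum_le_sum fun k _ => ?_
          rw [← Finset.mul_sum]
          exact mul_le_mul_right (eVariationOn.sum_le (f := f k) (n := m) hu us) _
  refine iSup_le ?_
  rintro ⟨m, u, hu, us⟩
  exact main m u hu us

/-- Variation of the weight `g_n = ∏_{k<n} g ∘ T^k` on a level-`n` cylinder: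
`V_Z(g_n) ≤ n Γ M² β^{n-1}`, where `Γ` bounds the variation of `g` on partition
elements and `sup_Z |g_k| ≤ M β^k` on every level-`k` cylinder. -/
theorem stmt15 {ι : Type*} [Fintype ι] (part : ι → Set ℝ)
    (hpart : ∀ i, (part i).OrdConnected)
    (hdisj : Pairwise (Function.onFun Disjoint part))
    (T : ℝ → ℝ)
    (hmono : ∀ i, StrictMonoOn T (part i) ∨ StrictAntiOn T (part i))
    (g : ℝ → ℂ) (Γ M β : ℝ) (hM : 1 ≤ M) (hβ : 0 < β)
    (hΓ : ∀ i, eVariationOn g (part i) ≤ ENNReal.ofReal Γ)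
    (hbnd : ∀ k : ℕ, 1 ≤ k → ∀ w : Fin k → ι, ∀ x ∈ cylSet T part w,
      ‖∏ j ∈ Finset.range k, g (T^[j] x)‖ ≤ M * β ^ k)
    (n : ℕ) (w : Fin n → ι) :
    eVariationOn (fun x => ∏ j ∈ Finset.range n, g (T^[j] x)) (cylSet T part w) ≤
      ENNReal.ofReal ((n : ℝ) * Γ * M ^ 2 * β ^ (n - 1)) := by
  set Z := cylSet T part w with hZ
  have hmem : ∀ x ∈ Z, ∀ j : Fin n, T^[(j : ℕ)] x ∈ part (w j) := by
    intro x hx j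
    exact Set.mem_iInter.mp hx j
  -- monotonicity (or antitonicity) of iterates of T on the cylinder
  have hiter : ∀ k, k ≤ n → StrictMonoOn (T^[k]) Z ∨ StrictAntiOn (T^[k]) Z := by
    intro k
    induction k with
    | zero =>
      intro _
      left
      intro x _ y _ hxy
      simpa using hxy
    | succ k ih =>
      intro hk
      have hk' : k < n := hk
      have hmaps : Set.MapsTo (T^[k]) Z (part (w ⟨k, hk'⟩)) := fun x hx => hmem x hx ⟨k, hk'⟩
      have heq : T^[k+1] = T ∘ T^[k] := Function.iterate_succ' T k
      rw [heq]
      rcases ih hk'.le with h1 | h1 <;> rcases hmono (w ⟨k, hk'⟩) with h2 | h2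
      · exact Or.inl fun x hx y hy hxy => h2 (hmaps hx) (hmaps hy) (h1 hx hy hxy)
      · exact Or.inr fun x hx y hy hxy => h2 (hmaps hx) (hmaps hy) (h1 hx hy hxy)
      · exact Or.inr fun x hx y hy hxy => h2 (hmaps hy) (hmaps hx) (h1 hx hy hxy)
      · exact Or.inl fun x hx y hy hxy => h2 (hmaps hy) (hmaps hx) (h1 hx hy hxy)
  -- variation of each factor g ∘ T^[k] on Z is at most Γ
  have hvar : ∀ k, k < n → eVariationOn (fun x => g (T^[k] x)) Z ≤ ENNReal.ofReal Γ := by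
    intro k hk
    have hmaps : Set.MapsTo (T^[k]) Z (part (w ⟨k, hk⟩)) := fun x hx => hmem x hx ⟨k, hk⟩
    rcases hiter k hk.le with h | h
    · exact (eVariationOn.comp_le_of_monotoneOn g (T^[k]) h.monotoneOn hmaps).trans
        (hΓ (w ⟨k, hk⟩))
    · exact (eVariationOn.comp_le_of_antitoneOn g (T^[k]) h.antitoneOn hmaps).trans
        (hΓ (w ⟨k, hk⟩))
  have hM0 : (0:ℝ) ≤ M := le_trans zero_le_one hM
  -- head partial product bounds
  have hA : ∀ k, k < n → ∀ x ∈ Z, ‖∏ j ∈ Finset.range k, g (T^[j] x)‖ ≤ M * β ^ k := by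
    intro k hk x hx
    rcases Nat.eq_zero_or_pos k with rfl | hk1
    · simpa using hM
    · refine hbnd k hk1 (fun j => w ⟨(j : ℕ), lt_trans j.2 hk⟩) x ?_
      refine Set.mem_iInter.mpr fun j => ?_
      exact hmem x hx ⟨(j : ℕ), lt_trans j.2 hk⟩
  -- tail partial product bounds
  have hB : ∀ k, k < n → ∀ x ∈ Z,
      ‖∏ j ∈ Finset.Ico (k+1) n, g (T^[j] x)‖ ≤ M * β ^ (n - 1 - k) := by
    intro k hk x hx
    set m := n - (k + 1) with hm
    have hrw : ∏ j ∈ Finset.Ico (k+1) n, g (T^[j] x)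
        = ∏ j ∈ Finset.range m, g (T^[j] (T^[k+1] x)) := by
      rw [Finset.prod_Ico_eq_prod_range]
      refine Finset.prod_congr rfl fun j _ => ?_
      rw [add_comm (k+1) j, Function.iterate_add_apply]
    have hexp : n - 1 - k = m := by omega
    rw [hrw, hexp]
    rcases Nat.eq_zero_or_pos m with h0 | h1
    · rw [h0]
      simpa using hM
    · refine hbnd m h1 (fun j => w ⟨(j : ℕ) + (k + 1), by omega⟩) (T^[k+1] x) ?_
      refine Set.mem_iInter.mpr fun j => ?_
      have heq : T^[(j:ℕ)] (T^[k+1] x) = T^[(j:ℕ)+(k+1)] x :=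
        (Function.iterate_add_apply T (j:ℕ) (k+1) x).symm
      rw [Set.mem_preimage, heq]
      exact hmem x hx ⟨(j : ℕ) + (k + 1), by omega⟩
  have hkey := evar_prod_le (fun k x => g (T^[k] x)) n Z
    (fun k => M * β ^ k) (fun k => M * β ^ (n - 1 - k))
    (fun k => mul_nonneg hM0 (pow_nonneg hβ.le k))
    (fun k => mul_nonneg hM0 (pow_nonneg hβ.le _)) hA hB
  refine hkey.trans ?_
  have hAB : ∀ k, k < n → (M * β ^ k) * (M * β ^ (n - 1 - k)) = M ^ 2 * β ^ (n - 1) := by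
    intro k hk
    have hpow : β ^ (n - 1) = β ^ k * β ^ (n - 1 - k) := by
      rw [← pow_add]
      congr 1
      omega
    rw [hpow]
    ring
  calc (∑ k ∈ Finset.range n,
        ENNReal.ofReal ((M * β ^ k) * (M * β ^ (n - 1 - k))) *
          eVariationOn (fun x => g (T^[k] x)) Z)
      ≤ ∑ _k ∈ Finset.range n, ENNReal.ofReal (M ^ 2 * β ^ (n - 1)) * ENNReal.ofReal Γ := by
        refine Finset.sum_le_sum fun k hk => ?_
        rw [hAB k (Finset.mem_range.mp hk)]
        exact mul_le_mul_right (hvar k (Finset.mem_range.mp hk)) _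
    _ = (n : ℝ≥0∞) * (ENNReal.ofReal (M ^ 2 * β ^ (n - 1)) * ENNReal.ofReal Γ) := by
        rw [Finset.sum_const, Finset.card_range, nsmul_eq_mul]
    _ ≤ ENNReal.ofReal ((n : ℝ) * Γ * M ^ 2 * β ^ (n - 1)) := by
        rcases le_or_gt 0 Γ with hΓ0 | hΓ0
        · rw [← ENNReal.ofReal_mul (by positivity), ← ENNReal.ofReal_natCast n,
            ← ENNReal.ofReal_mul (by positivity)]
          exact ENNReal.ofReal_le_ofReal (le_of_eq (by ring))
        · rw [ENNReal.ofReal_of_nonpos hΓ0.le, mul_zero, mul_zero]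
          exact zero_le
end
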